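/- arXiv:2205.00651 — 4 statements merged into one kernel-verified Lean document; each statement's English description precedes it below -/
import Mathlib

section
/- Let S_n be the elephant random walk with memory parameter p ∈ (0,1) and first-step parameter q ∈ [0,1], and set α = 2p−1. If −1 < α < 0 and α ≠ −1/2, then as n → ∞, E[(S_n/√(n/(1−2α)))^2] − 1 is asymptotically equivalent to −(1/Γ(2α)) · n^{−(1−2α)}. -/
open MeasureTheory ProbabilityTheory Filter Asymptotics

noncomputable section

/-- The σ-algebra 𝓕ₙ = σ(X₁, …, Xₙ) generated by the first `n` steps. -/
def erwFiltration {Ω : Type*} (X : ℕ → Ω → ℝ) (n : ℕ) : MeasurableSpace Ω :=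
  ⨆ i ∈ Finset.Icc 1 n, MeasurableSpace.comap (X i) inferInstance

/-- The position `Sₙ = X₁ + ⋯ + Xₙ` of the walk. -/
def erwS {Ω : Type*} (X : ℕ → Ω → ℝ) (n : ℕ) (ω : Ω) : ℝ :=
  ∑ i ∈ Finset.Icc 1 n, X i ω

/-- `X` is an elephant random walk (sequence of ±1 steps) with memory parameter
`p ∈ (0,1)` and first-step parameter `q ∈ [0,1]`:  `X₁ = 1` with probability `q`
(and `= -1` with probability `1-q`), and given `𝓕ₙ`, the step `X_{n+1}` equals `±1`
with conditional probability `(1 ± α Sₙ/n)/2`, where `α = 2p-1`. -/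
structure IsERW {Ω : Type*} [MeasurableSpace Ω] (μ : Measure Ω)
    (p q : ℝ) (X : ℕ → Ω → ℝ) : Prop where
  hp : p ∈ Set.Ioo (0:ℝ) 1
  hq : q ∈ Set.Icc (0:ℝ) 1
  prob : IsProbabilityMeasure μ
  meas : ∀ n, Measurable (X n)
  pm_one : ∀ n, 1 ≤ n → ∀ᵐ ω ∂μ, X n ω = 1 ∨ X n ω = -1
  first_step : μ {ω | X 1 ω = 1} = ENNReal.ofReal q
  cond : ∀ n, 1 ≤ n →
    μ[({ω' | X (n + 1) ω' = 1}.indicator fun _ => (1:ℝ)) | erwFiltration X n]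
      =ᵐ[μ] fun ω => (1 + (2 * p - 1) * erwS X n ω / n) / 2

/-- The odd double factorial `(2m-1)!! = 1·3·⋯·(2m-1)`. -/
def doubleFactOdd (m : ℕ) : ℝ := ∏ j ∈ Finset.range m, (2 * (j:ℝ) + 1)

end

section
open Topology

lemma gamma_prod_aux (β : ℝ) (hβ : ∀ m : ℕ, β ≠ -m) (n : ℕ) :
    ∏ j ∈ Finset.range (n + 1), (β + j) = Real.Gamma (β + n + 1) / Real.Gamma β := by
  have hβ0 : Real.Gamma β ≠ 0 := Real.Gamma_ne_zero hβ
  have hne : ∀ k : ℕ, β + k ≠ 0 := by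
    intro k h
    exact hβ k (by linarith)
  induction n with
  | zero =>
    simp only [zero_add, Finset.prod_range_one, Nat.cast_zero, add_zero]
    have h0 : β ≠ 0 := by simpa using hne 0
    rw [Real.Gamma_add_one h0]
    field_simp
  | succ n ih =>
    rw [Finset.prod_range_succ, ih]
    have h1 : β + (n + 1 : ℕ) + 1 = (β + n + 1) + 1 := by push_cast; ring
    have h2 : (β + n + 1) ≠ 0 := by simpa [add_assoc] using hne (n + 1)
    rw [h1, Real.Gamma_add_one h2]
    field_simp
    push_cast
    ring

lemma gamma_ratio_tendsto (β : ℝ) (hβ : ∀ m : ℕ, β ≠ -m) :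
    Tendsto (fun n : ℕ => (Real.Gamma (n + β) / Real.Gamma (n + 1)) / (n : ℝ) ^ (β - 1))
      atTop (𝓝 1) := by
  have hβ0 : Real.Gamma β ≠ 0 := Real.Gamma_ne_zero hβ
  have hne : ∀ k : ℕ, β + k ≠ 0 := by
    intro k h; exact hβ k (by linarith)
  -- A n = Γ(β+n+1)/(n^β Γ(n+1)) → 1
  have hA : Tendsto (fun n : ℕ => Real.Gamma (β + n + 1) / ((n : ℝ) ^ β * Real.Gamma (n + 1)))
      atTop (𝓝 1) := by
    have h1 : Tendsto (fun n : ℕ => Real.GammaSeq β n / Real.Gamma β) atTop (𝓝 1) := by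
      simpa [div_self hβ0] using (Real.GammaSeq_tendsto_Gamma β).div_const (Real.Gamma β)
    have h2 : Tendsto (fun n : ℕ => (Real.GammaSeq β n / Real.Gamma β)⁻¹) atTop (𝓝 1) := by
      simpa using h1.inv₀ one_ne_zero
    apply h2.congr'
    filter_upwards [eventually_ge_atTop 1] with n hn
    have hn0 : (0:ℝ) < n := by exact_mod_cast hn
    have hG : Real.Gamma (β + n + 1) ≠ 0 := by
      refine Real.Gamma_ne_zero fun m => fun h => hβ (m + n + 1) (by push_cast; linarith)
    have hnb : ((n:ℝ)) ^ β ≠ 0 := ne_of_gt (Real.rpow_pos_of_pos hn0 _)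
    have hnf : ((n.factorial : ℝ)) ≠ 0 := by positivity
    rw [Real.GammaSeq, gamma_prod_aux β hβ n, Real.Gamma_nat_eq_factorial n]
    field_simp
  -- n/(β+n) → 1
  have hB : Tendsto (fun n : ℕ => (n : ℝ) / (β + n)) atTop (𝓝 1) := by
    have h0 : Tendsto (fun n : ℕ => β + (n : ℝ)) atTop atTop :=
      tendsto_atTop_add_const_left _ β tendsto_natCast_atTop_atTop
    have h1 : Tendsto (fun n : ℕ => β * (β + (n : ℝ))⁻¹) atTop (𝓝 (β * 0)) :=
      h0.inv_tendsto_atTop.const_mul β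
    have h2 : Tendsto (fun n : ℕ => 1 - β * (β + (n : ℝ))⁻¹) atTop (𝓝 (1 - β * 0)) :=
      tendsto_const_nhds.sub h1
    simp only [mul_zero, sub_zero] at h2
    apply h2.congr'
    filter_upwards [eventually_gt_atTop 0] with n hn
    have hbn : β + (n : ℝ) ≠ 0 := hne n
    field_simp
    ring
  have := hA.mul hB
  rw [mul_one] at this
  apply this.congr'
  filter_upwards [eventually_ge_atTop 1] with n hn
  have hn0 : (0 : ℝ) < n := by exact_mod_cast hn
  have hbn : β + (n : ℝ) ≠ 0 := hne n
  have hRG : Real.Gamma (β + n + 1) = (β + n) * Real.Gamma (n + β) := by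
    rw [show β + (n:ℝ) + 1 = ((n:ℝ) + β) + 1 by ring, Real.Gamma_add_one (by rw [add_comm]; exact hbn)]
    ring_nf
  have hrpow : (n : ℝ) ^ β = (n : ℝ) ^ (β - 1) * n := by
    rw [Real.rpow_sub hn0, Real.rpow_one]
    field_simp
  have hΓn1 : Real.Gamma ((n : ℝ) + 1) ≠ 0 := ne_of_gt (Real.Gamma_pos_of_pos (by positivity))
  have hr : (n : ℝ) ^ (β - 1) ≠ 0 := ne_of_gt (Real.rpow_pos_of_pos hn0 _)
  rw [hRG, hrpow]
  field_simp


section Aux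

variable {Ω : Type*} [MeasurableSpace Ω] {μ : Measure Ω} {p q : ℝ} {X : ℕ → Ω → ℝ}

lemma erw_ae_pm (h : IsERW μ p q X) :
    ∀ᵐ ω ∂μ, ∀ i, 1 ≤ i → (X i ω = 1 ∨ X i ω = -1) := by
  rw [ae_all_iff]
  intro i
  by_cases hi : 1 ≤ i
  · filter_upwards [h.pm_one i hi] with ω hω _ using hω
  · filter_upwards with ω hω; exact absurd hω hi

lemma erw_S_bound (h : IsERW μ p q X) (n : ℕ) :
    ∀ᵐ ω ∂μ, |erwS X n ω| ≤ n := by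
  filter_upwards [erw_ae_pm h] with ω hω
  calc |erwS X n ω| ≤ ∑ i ∈ Finset.Icc 1 n, |X i ω| := Finset.abs_sum_le_sum_abs _ _
    _ ≤ ∑ i ∈ Finset.Icc 1 n, 1 := by
        refine Finset.sum_le_sum fun i hi => ?_
        rcases hω i (Finset.mem_Icc.mp hi).1 with h1 | h1 <;> simp [h1]
    _ = n := by simp [Nat.card_Icc]

lemma erw_S_meas (h : IsERW μ p q X) (n : ℕ) : Measurable (erwS X n) :=
  Finset.measurable_sum _ fun i _ => h.meas i

lemma erw_filtration_le (h : IsERW μ p q X) (n : ℕ) :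
    erwFiltration X n ≤ ‹MeasurableSpace Ω› :=
  iSup₂_le fun i _ => measurable_iff_comap_le.mp (h.meas i)

lemma erw_S_meas_filt (h : IsERW μ p q X) (n : ℕ) :
    Measurable[erwFiltration X n] (erwS X n) := by
  apply Finset.measurable_sum
  intro i hi
  refine measurable_iff_comap_le.mpr ?_
  exact le_iSup₂ (f := fun i (_ : i ∈ Finset.Icc 1 n) => MeasurableSpace.comap (X i) inferInstance) i hi

lemma erw_X_int (h : IsERW μ p q X) {i : ℕ} (hi : 1 ≤ i) : Integrable (X i) μ := by
  haveI := h.prob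
  refine Integrable.mono' (integrable_const 1) (h.meas i).aestronglyMeasurable ?_
  filter_upwards [h.pm_one i hi] with ω hω
  rcases hω with h1 | h1 <;> simp [h1]

lemma erw_Ssq_int (h : IsERW μ p q X) (n : ℕ) :
    Integrable (fun ω => erwS X n ω ^ 2) μ := by
  haveI := h.prob
  refine Integrable.mono' (integrable_const ((n:ℝ)^2))
    ((erw_S_meas h n).pow_const 2).aestronglyMeasurable ?_
  filter_upwards [erw_S_bound h n] with ω hω
  rw [Real.norm_eq_abs, abs_pow]
  calc |erwS X n ω| ^ 2 ≤ (n:ℝ) ^ 2 := by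
        apply pow_le_pow_left₀ (abs_nonneg _) hω

lemma erw_SX_int (h : IsERW μ p q X) (n : ℕ) :
    Integrable (fun ω => erwS X n ω * X (n + 1) ω) μ := by
  haveI := h.prob
  refine Integrable.mono' (integrable_const ((n:ℝ)))
    ((erw_S_meas h n).mul (h.meas (n + 1))).aestronglyMeasurable ?_
  filter_upwards [erw_S_bound h n, h.pm_one (n+1) (by omega)] with ω hω h1
  rw [Real.norm_eq_abs, abs_mul]
  have : |X (n+1) ω| = 1 := by rcases h1 with h1 | h1 <;> simp [h1]
  rw [this, mul_one]
  exact hω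

/-- Conditional expectation of the next step. -/
lemma erw_condexp_X (h : IsERW μ p q X) (n : ℕ) (hn : 1 ≤ n) :
    μ[X (n + 1) | erwFiltration X n] =ᵐ[μ]
      fun ω => (2 * p - 1) * erwS X n ω / n := by
  haveI := h.prob
  set I : Ω → ℝ := ({ω' | X (n + 1) ω' = 1}.indicator fun _ => (1:ℝ)) with hI
  have hIint : Integrable I μ := by
    refine (integrable_const (1:ℝ)).indicator ?_
    exact (h.meas (n+1)) (measurableSet_singleton 1)
  have hXI : X (n + 1) =ᵐ[μ] fun ω => (2:ℝ) * I ω - 1 := by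
    filter_upwards [h.pm_one (n+1) (by omega)] with ω hω
    rcases hω with h1 | h1
    · have hmem : ω ∈ {ω' | X (n + 1) ω' = 1} := h1
      have : I ω = 1 := Set.indicator_of_mem hmem _
      rw [h1, this]; norm_num
    · have hmem : ω ∉ {ω' | X (n + 1) ω' = 1} := by
        simp only [Set.mem_setOf_eq, h1]; norm_num
      have : I ω = 0 := Set.indicator_of_notMem hmem _
      rw [h1, this]; norm_num
  calc μ[X (n + 1) | erwFiltration X n]
      =ᵐ[μ] μ[fun ω => (2:ℝ) * I ω - 1 | erwFiltration X n] := condExp_congr_ae hXI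
    _ =ᵐ[μ] μ[(2:ℝ) • I | erwFiltration X n] - μ[(fun _ => (1:ℝ)) | erwFiltration X n] := by
        have : (fun ω => (2:ℝ) * I ω - 1) = ((2:ℝ) • I) - (fun _ => (1:ℝ)) := by
          ext ω; simp [smul_eq_mul]
        rw [this]
        exact condExp_sub (hIint.smul (2:ℝ)) (integrable_const 1) _
    _ =ᵐ[μ] fun ω => (2 * p - 1) * erwS X n ω / n := by
        have h2 : μ[(2:ℝ) • I | erwFiltration X n] =ᵐ[μ] (2:ℝ) • μ[I | erwFiltration X n] :=
          condExp_smul (2:ℝ) I _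
        have h3 : μ[(fun _ => (1:ℝ)) | erwFiltration X n] = fun _ => (1:ℝ) :=
          condExp_const (erw_filtration_le h n) 1
        filter_upwards [h2, h.cond n hn] with ω h2ω hcω
        rw [← hI] at hcω
        simp only [Pi.sub_apply, h3, h2ω, Pi.smul_apply, smul_eq_mul, hcω]
        ring


lemma erw_secmom_one (h : IsERW μ p q X) :
    ∫ ω, erwS X 1 ω ^ 2 ∂μ = 1 := by
  haveI := h.prob
  have : (fun ω => erwS X 1 ω ^ 2) =ᵐ[μ] fun _ => (1:ℝ) := by
    filter_upwards [h.pm_one 1 le_rfl] with ω hω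
    have : erwS X 1 ω = X 1 ω := by simp [erwS]
    rcases hω with h1 | h1 <;> simp [this, h1]
  rw [integral_congr_ae this]
  simp

lemma erw_secmom_rec (h : IsERW μ p q X) (n : ℕ) (hn : 1 ≤ n) :
    ∫ ω, erwS X (n + 1) ω ^ 2 ∂μ
      = (1 + 2 * (2 * p - 1) / n) * ∫ ω, erwS X n ω ^ 2 ∂μ + 1 := by
  haveI := h.prob
  have hm := erw_filtration_le h n
  haveI : SigmaFinite (μ.trim hm) := by
    haveI : IsFiniteMeasure (μ.trim hm) := isFiniteMeasure_trim hm
    infer_instance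
  -- key: ∫ S_n X_{n+1} = (2p-1)/n ∫ S_n²
  have hSX : ∫ ω, erwS X n ω * X (n + 1) ω ∂μ
      = (2 * p - 1) / n * ∫ ω, erwS X n ω ^ 2 ∂μ := by
    have hpull : μ[(fun ω => erwS X n ω * X (n + 1) ω) | erwFiltration X n]
        =ᵐ[μ] fun ω => erwS X n ω * (μ[X (n + 1) | erwFiltration X n]) ω := by
      have := condExp_stronglyMeasurable_mul_of_bound hm
        ((erw_S_meas_filt h n).stronglyMeasurable) (erw_X_int h (show 1 ≤ n + 1 by omega))
        (n : ℝ) (by filter_upwards [erw_S_bound h n] with ω hω; simpa using hω)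
      exact this
    have h1 : ∫ ω, erwS X n ω * X (n + 1) ω ∂μ
        = ∫ ω, (μ[(fun ω => erwS X n ω * X (n + 1) ω) | erwFiltration X n]) ω ∂μ :=
      (integral_condExp hm).symm
    rw [h1, integral_congr_ae hpull]
    have h2 : (fun ω => erwS X n ω * (μ[X (n + 1) | erwFiltration X n]) ω)
        =ᵐ[μ] fun ω => (2 * p - 1) / n * erwS X n ω ^ 2 := by
      filter_upwards [erw_condexp_X h n hn] with ω hω
      rw [hω]; ring
    rw [integral_congr_ae h2, integral_const_mul]
  -- expansion
  have hexp : ∀ ω, erwS X (n + 1) ω ^ 2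
      = erwS X n ω ^ 2 + 2 * (erwS X n ω * X (n + 1) ω) + X (n + 1) ω ^ 2 := by
    intro ω
    have : erwS X (n + 1) ω = erwS X n ω + X (n + 1) ω := by
      simp only [erwS]
      rw [← Finset.sum_Icc_succ_top (by omega : 1 ≤ n + 1)]
    rw [this]; ring
  have hXsq : ∫ ω, X (n + 1) ω ^ 2 ∂μ = 1 := by
    have : (fun ω => X (n + 1) ω ^ 2) =ᵐ[μ] fun _ => (1:ℝ) := by
      filter_upwards [h.pm_one (n+1) (by omega)] with ω hω
      rcases hω with h1 | h1 <;> simp [h1]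
    rw [integral_congr_ae this]; simp
  have hXsq_int : Integrable (fun ω => X (n + 1) ω ^ 2) μ := by
    refine Integrable.mono' (integrable_const 1)
      (((h.meas (n+1)).pow_const 2).aestronglyMeasurable) ?_
    filter_upwards [h.pm_one (n+1) (by omega)] with ω hω
    rcases hω with h1 | h1 <;> simp [h1]
  calc ∫ ω, erwS X (n + 1) ω ^ 2 ∂μ
      = ∫ ω, (erwS X n ω ^ 2 + 2 * (erwS X n ω * X (n + 1) ω) + X (n + 1) ω ^ 2) ∂μ := by
        exact integral_congr_ae (Eventually.of_forall fun ω => hexp ω)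
    _ = (∫ ω, erwS X n ω ^ 2 ∂μ) + (∫ ω, 2 * (erwS X n ω * X (n + 1) ω) ∂μ)
          + ∫ ω, X (n + 1) ω ^ 2 ∂μ := by
        have i2 : Integrable (fun ω => 2 * (erwS X n ω * X (n + 1) ω)) μ :=
          (erw_SX_int h n).const_mul 2
        have i1 : Integrable (fun ω => erwS X n ω ^ 2 + 2 * (erwS X n ω * X (n + 1) ω)) μ :=
          (erw_Ssq_int h n).add i2
        rw [integral_add i1 hXsq_int, integral_add (erw_Ssq_int h n) i2]
    _ = (1 + 2 * (2 * p - 1) / n) * ∫ ω, erwS X n ω ^ 2 ∂μ + 1 := by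
        rw [integral_const_mul, hSX, hXsq]
        ring


lemma two_alpha_ne {α : ℝ} (h1 : -1 < α) (h2 : α < 0) (h3 : α ≠ -(1 / 2)) :
    ∀ m : ℕ, 2 * α ≠ -(m : ℝ) := by
  intro m hm
  match m with
  | 0 => simp at hm; linarith
  | 1 => apply h3; push_cast at hm; linarith
  | (k + 2) =>
    have : (0:ℝ) ≤ k := Nat.cast_nonneg k
    push_cast at hm
    linarith

lemma erw_secmom_closed (h : IsERW μ p q X) {α : ℝ} (hα : α = 2 * p - 1)
    (h1 : -1 < α) (h2 : α < 0) (h3 : α ≠ -(1 / 2)) (n : ℕ) (hn : 1 ≤ n) :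
    ∫ ω, erwS X n ω ^ 2 ∂μ
      = n / (1 - 2 * α)
        - Real.Gamma (n + 2 * α) / ((1 - 2 * α) * Real.Gamma (2 * α) * Real.Gamma n) := by
  have hΓ2 : Real.Gamma (2 * α) ≠ 0 := Real.Gamma_ne_zero (two_alpha_ne h1 h2 h3)
  have h12 : (1 : ℝ) - 2 * α ≠ 0 := by linarith
  induction n, hn using Nat.le_induction with
  | base =>
    rw [erw_secmom_one h]
    have e1 : ((1:ℕ):ℝ) + 2 * α = 2 * α + 1 := by push_cast; ring
    rw [e1, Real.Gamma_add_one (by linarith : 2 * α ≠ 0)]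
    simp only [Nat.cast_one, Real.Gamma_one]
    field_simp
  | succ n hn ih =>
    have hn0 : ((n:ℝ)) ≠ 0 := by positivity
    have hΓn : Real.Gamma n ≠ 0 := ne_of_gt (Real.Gamma_pos_of_pos (by positivity))
    have hna : (n:ℝ) + 2 * α ≠ 0 := by
      rcases eq_or_lt_of_le hn with hn1 | hn1
      · rw [← hn1]; push_cast; intro hh; apply h3; linarith
      · have : (2:ℝ) ≤ n := by exact_mod_cast hn1
        intro hh; linarith
    have e1 : ((n + 1 : ℕ):ℝ) + 2 * α = ((n:ℝ) + 2 * α) + 1 := by push_cast; ring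
    have e2 : ((n + 1 : ℕ):ℝ) = (n:ℝ) + 1 := by push_cast; ring
    rw [erw_secmom_rec h n hn, ih, e1, e2,
      Real.Gamma_add_one hna, Real.Gamma_add_one hn0, ← hα]
    field_simp
    ring

end Aux

theorem stmt_2_aux {Ω : Type*} [MeasurableSpace Ω] (μ : MeasureTheory.Measure Ω)
    (p q α : ℝ) (X : ℕ → Ω → ℝ) (hERW : IsERW μ p q X)
    (hα : α = 2 * p - 1) (h1 : -1 < α) (h2 : α < 0) (h3 : α ≠ -(1 / 2)) :
    (fun n : ℕ =>
        (∫ ω, (erwS X n ω / Real.sqrt ((n : ℝ) / (1 - 2 * α))) ^ 2 ∂μ) - 1)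
      ~[atTop]
    (fun n : ℕ => -(1 / Real.Gamma (2 * α)) * (n : ℝ) ^ (-(1 - 2 * α))) := by
  have hΓ2 : Real.Gamma (2 * α) ≠ 0 := Real.Gamma_ne_zero (two_alpha_ne h1 h2 h3)
  have h12 : (0 : ℝ) < 1 - 2 * α := by linarith
  have hc : -(1 / Real.Gamma (2 * α)) ≠ 0 := by
    simp only [ne_eq, neg_eq_zero, div_eq_zero_iff, one_ne_zero, false_or]
    exact hΓ2
  -- eventual closed form of LHS
  have hEq : ∀ n : ℕ, 1 ≤ n →
      (∫ ω, (erwS X n ω / Real.sqrt ((n : ℝ) / (1 - 2 * α))) ^ 2 ∂μ) - 1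
        = -(1 / Real.Gamma (2 * α)) * (Real.Gamma ((n:ℝ) + 2 * α) / Real.Gamma ((n:ℝ) + 1)) := by
    intro n hn
    have hn0 : (0:ℝ) < n := by exact_mod_cast hn
    have hv : (0:ℝ) < (n : ℝ) / (1 - 2 * α) := by positivity
    have hΓn : Real.Gamma n ≠ 0 := ne_of_gt (Real.Gamma_pos_of_pos hn0)
    have e1 : ∀ ω, (erwS X n ω / Real.sqrt ((n : ℝ) / (1 - 2 * α))) ^ 2
        = erwS X n ω ^ 2 / ((n : ℝ) / (1 - 2 * α)) := by
      intro ω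
      rw [div_pow, Real.sq_sqrt hv.le]
    rw [integral_congr_ae (Eventually.of_forall e1), integral_div,
      erw_secmom_closed hERW hα h1 h2 h3 n hn, Real.Gamma_add_one hn0.ne']
    field_simp
    ring
  rw [isEquivalent_iff_tendsto_one]
  · have hrt := gamma_ratio_tendsto (2 * α) (two_alpha_ne h1 h2 h3)
    apply hrt.congr'
    filter_upwards [eventually_ge_atTop 1] with n hn
    have hn0 : (0:ℝ) < n := by exact_mod_cast hn
    rw [Pi.div_apply, hEq n hn, show -(1 - 2 * α) = 2 * α - 1 by ring,
      mul_div_mul_left _ _ hc]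
  · filter_upwards [eventually_ge_atTop 1] with n hn
    have hn0 : (0:ℝ) < n := by exact_mod_cast hn
    exact mul_ne_zero hc (ne_of_gt (Real.rpow_pos_of_pos hn0 _))

end

/-- Theorem 2 (i), second moment: exact rate of convergence for −1 < α < 0, α ≠ −1/2. -/
theorem stmt_2 {Ω : Type*} [MeasurableSpace Ω] (μ : MeasureTheory.Measure Ω)
    (p q α : ℝ) (X : ℕ → Ω → ℝ) (hERW : IsERW μ p q X)
    (hα : α = 2 * p - 1) (h1 : -1 < α) (h2 : α < 0) (h3 : α ≠ -(1 / 2)) :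
    (fun n : ℕ =>
        (∫ ω, (erwS X n ω / Real.sqrt ((n : ℝ) / (1 - 2 * α))) ^ 2 ∂μ) - 1)
      ~[atTop]
    (fun n : ℕ => -(1 / Real.Gamma (2 * α)) * (n : ℝ) ^ (-(1 - 2 * α))) := by
  exact stmt_2_aux μ p q α X hERW hα h1 h2 h3
end

section
/- Let S_n be the elephant random walk with memory parameter p ∈ (0,1) and first-step parameter q ∈ [0,1], and set α = 2p−1. Then, as n → ∞: E[(S_n)^2] ~ n/(1−2α) if −1 < α < 1/2; E[(S_n)^2] ~ n log n if α = 1/2; and E[(S_n)^2] ~ n^{2α}/((2α−1)Γ(2α)) if 1/2 < α < 1, where x_n ~ y_n means x_n/y_n → 1. -/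
open MeasureTheory ProbabilityTheory Filter Asymptotics

/-!
Writing `m n = E[(S n)^2]` and `β = 2α`, the identity `S (n+1)^2 = S n^2 + 2 S n X (n+1) + 1`
and the drift `E[X (n+1) | 𝓕 n] = α S n / n` give the exact recurrence
`m (n+1) = (1 + β/n) m n + 1` with `m 1 = 1`. For `β ≠ 1` it is solved by
`m (n+1) = (n + 1 - β P n) / (1 - β)` with `P n = ∏_{k ≤ n} (1 + β/k)`, and for `β = 1` by
`m n = n H n` with `H` the harmonic numbers. By Euler's limit formula `P n ~ n^β / Γ(β+1)`,
which dominates `n` when `β > 1`; for `β < 1` the bound `P n / (n+1) ≤ C exp (-(1-β) ∑ 1/k)`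
shows `P n = o(n)`; and `H n ~ log n` in the critical case.
-/

open Topology

lemma tendsto_prod_one_sub_of_not_summable {x : ℕ → ℝ} (hx0 : ∀ k, 0 ≤ x k)
    (hx1 : ∀ k, x k ≤ 1) (hx : ¬ Summable x) :
    Tendsto (fun n => ∏ k ∈ Finset.range n, (1 - x k)) atTop (𝓝 0) := by
  have hsum := (not_summable_iff_tendsto_nat_atTop_of_nonneg hx0).mp hx
  refine squeeze_zero (fun n => Finset.prod_nonneg fun k _ => sub_nonneg.mpr (hx1 k))
    (fun n => ?_) (Real.tendsto_exp_neg_atTop_nhds_zero.comp hsum)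
  calc ∏ k ∈ Finset.range n, (1 - x k)
      ≤ ∏ k ∈ Finset.range n, Real.exp (-x k) :=
        Finset.prod_le_prod (fun k _ => sub_nonneg.mpr (hx1 k))
          fun k _ => Real.one_sub_le_exp_neg (x k)
    _ = Real.exp (-∑ k ∈ Finset.range n, x k) := by
        rw [← Finset.sum_neg_distrib, Real.exp_sum]

lemma isEquivalent_harmonic_log :
    (fun n : ℕ => (harmonic n : ℝ)) ~[atTop] fun n => Real.log n := by
  refine IsLittleO.isEquivalent ?_
  refine (Real.tendsto_harmonic_sub_log.isBigO_one ℝ).trans_isLittleO ?_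
  exact (isLittleO_one_left_iff ℝ).mpr
    (tendsto_norm_atTop_atTop.comp (Real.tendsto_log_atTop.comp tendsto_natCast_atTop_atTop))

namespace ERW

-- `gammaRatio β n = ∏_{k=1}^n (1 + β/k) = Γ(n+1+β) / (Γ(β+1) n!)` solves the homogeneous
-- recurrence `b (n+1) = (1 + β/n) b n`.
noncomputable def gammaRatio (β : ℝ) (n : ℕ) : ℝ := ∏ k ∈ Finset.range n, (1 + β / (k + 1))

lemma gammaRatio_succ (β : ℝ) (n : ℕ) :
    gammaRatio β (n + 1) = gammaRatio β n * (1 + β / (n + 1)) :=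
  Finset.prod_range_succ _ _

lemma gammaRatio_pos {β : ℝ} (hβ : -1 < β) (n : ℕ) : 0 < gammaRatio β n := by
  refine Finset.prod_pos fun k _ => ?_
  have : -1 < β / (k + 1) := by
    rw [lt_div_iff₀ (by positivity)]
    nlinarith [k.cast_nonneg (α := ℝ)]
  linarith

-- `a n - n/(1-β)` solves the homogeneous recurrence.
lemma eq_gammaRatio_of_recurrence {β : ℝ} (hβ : β ≠ 1) {a : ℕ → ℝ} (ha1 : a 1 = 1)
    (hrec : ∀ n, 1 ≤ n → a (n + 1) = (1 + β / n) * a n + 1) (n : ℕ) :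
    a (n + 1) = ((n + 1) - β * gammaRatio β n) / (1 - β) := by
  have hβ' : 1 - β ≠ 0 := sub_ne_zero.mpr (Ne.symm hβ)
  induction n with
  | zero => simp [ha1, gammaRatio]; field_simp
  | succ n ih =>
    rw [hrec (n + 1) (by omega), ih, gammaRatio_succ]
    push_cast
    field_simp
    ring

lemma eq_mul_harmonic_of_recurrence {a : ℕ → ℝ} (ha1 : a 1 = 1)
    (hrec : ∀ n, 1 ≤ n → a (n + 1) = (1 + 1 / n) * a n + 1) (n : ℕ) (hn : 1 ≤ n) :
    a n = n * harmonic n := by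
  induction n, hn using Nat.le_induction with
  | base => simp [ha1]
  | succ n hn ih =>
    rw [hrec n hn, ih, harmonic_succ]
    push_cast
    field_simp

-- The factor `k = 0` is split off because it is negative for `β < -1`.
lemma gammaRatio_succ_div_eq_prod (β : ℝ) (n : ℕ) :
    gammaRatio β (n + 1) / (n + 2) =
      (1 + β) / 2 * ∏ k ∈ Finset.range n, (1 - (1 - β) / (k + 3)) := by
  induction n with
  | zero => simp [gammaRatio]
  | succ n ih =>
    rw [gammaRatio_succ, Finset.prod_range_succ, ← mul_assoc, ← ih]
    push_cast
    field_simp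
    ring

lemma tendsto_gammaRatio_div_add_one_nhds_zero {β : ℝ} (h2 : -2 < β) (h1 : β < 1) :
    Tendsto (fun n : ℕ => gammaRatio β n / (n + 1)) atTop (𝓝 0) := by
  have hsum : ¬ Summable fun k : ℕ => (1 - β) / (k + 3) := by
    simp_rw [div_eq_mul_one_div (1 - β)]
    rw [summable_mul_left_iff (by linarith)]
    have := (summable_nat_add_iff 3).not.mpr Real.not_summable_one_div_natCast
    exact_mod_cast this
  have hprod := (tendsto_prod_one_sub_of_not_summable
    (fun k => div_nonneg (by linarith) (by positivity))
    (fun k => (div_le_one (by positivity)).mpr (by linarith [(k.cast_nonneg : (0:ℝ) ≤ k)]))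
    hsum).const_mul ((1 + β) / 2)
  rw [mul_zero] at hprod
  rw [← tendsto_add_atTop_iff_nat 1]
  convert hprod using 2 with n
  rw [← gammaRatio_succ_div_eq_prod]
  push_cast
  ring_nf

lemma GammaSeq_eq_rpow_div_gammaRatio (β : ℝ) (n : ℕ) :
    Real.GammaSeq β n = (n : ℝ) ^ β / (β * gammaRatio β n) := by
  have hprod : ∏ j ∈ Finset.range (n + 1), (β + j) = β * n.factorial * gammaRatio β n := by
    induction n with
    | zero => simp [gammaRatio]
    | succ n ih =>
      rw [Finset.prod_range_succ, ih, gammaRatio_succ, Nat.factorial_succ]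
      push_cast
      field_simp
      ring
  have : (n.factorial : ℝ) ≠ 0 := by positivity
  rw [Real.GammaSeq, hprod]
  field_simp

lemma tendsto_Gamma_mul_gammaRatio_div_rpow {β : ℝ} (hβ : 0 < β) :
    Tendsto (fun n : ℕ => Real.Gamma (β + 1) * gammaRatio β n / ((n : ℝ) + 1) ^ β)
      atTop (𝓝 1) := by
  have hΓ : Real.Gamma β ≠ 0 := (Real.Gamma_pos_of_pos hβ).ne'
  have hlim :=
    ((tendsto_const_nhds (x := Real.Gamma β)).div (Real.GammaSeq_tendsto_Gamma β) hΓ).mul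
      ((tendsto_natCast_div_add_atTop (1 : ℝ)).rpow_const (Or.inr hβ.le))
  rw [div_self hΓ, Real.one_rpow, mul_one] at hlim
  refine hlim.congr' ?_
  filter_upwards [eventually_ge_atTop 1] with n hn
  have hn : (0 : ℝ) < n := by exact_mod_cast hn
  have hg := gammaRatio_pos (by linarith) n
  rw [Pi.div_apply, GammaSeq_eq_rpow_div_gammaRatio, Real.Gamma_add_one hβ.ne',
    Real.div_rpow hn.le (by positivity)]
  have : (n : ℝ) ^ β ≠ 0 := (Real.rpow_pos_of_pos hn β).ne'
  have : ((n : ℝ) + 1) ^ β ≠ 0 := (Real.rpow_pos_of_pos (by positivity) β).ne'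
  field_simp

lemma isEquivalent_of_recurrence_of_lt_one {β : ℝ} (h2 : -2 < β) (h1 : β < 1) {a : ℕ → ℝ}
    (ha1 : a 1 = 1) (hrec : ∀ n, 1 ≤ n → a (n + 1) = (1 + β / n) * a n + 1) :
    a ~[atTop] fun n : ℕ => (n : ℝ) / (1 - β) := by
  refine isEquivalent_of_tendsto_one ((tendsto_add_atTop_iff_nat 1).mp ?_)
  have hlim := (tendsto_const_nhds (x := (1 : ℝ))).sub
    ((tendsto_gammaRatio_div_add_one_nhds_zero h2 h1).const_mul β)
  rw [mul_zero, sub_zero] at hlim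
  refine hlim.congr fun n => ?_
  have : 1 - β ≠ 0 := by linarith
  rw [Pi.div_apply, eq_gammaRatio_of_recurrence h1.ne ha1 hrec]
  push_cast
  field_simp

lemma isEquivalent_of_recurrence_one {a : ℕ → ℝ} (ha1 : a 1 = 1)
    (hrec : ∀ n, 1 ≤ n → a (n + 1) = (1 + 1 / n) * a n + 1) :
    a ~[atTop] fun n : ℕ => (n : ℝ) * Real.log n := by
  refine (IsEquivalent.refl.mul isEquivalent_harmonic_log).congr_left ?_
  filter_upwards [eventually_ge_atTop 1] with n hn
  exact (eq_mul_harmonic_of_recurrence ha1 hrec n hn).symm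

lemma isEquivalent_of_recurrence_of_one_lt {β : ℝ} (hβ : 1 < β) {a : ℕ → ℝ}
    (ha1 : a 1 = 1) (hrec : ∀ n, 1 ≤ n → a (n + 1) = (1 + β / n) * a n + 1) :
    a ~[atTop] fun n : ℕ => (n : ℝ) ^ β / ((β - 1) * Real.Gamma β) := by
  refine isEquivalent_of_tendsto_one ((tendsto_add_atTop_iff_nat 1).mp ?_)
  have hpow : Tendsto (fun n : ℕ => ((n : ℝ) + 1) ^ (β - 1)) atTop atTop :=
    (tendsto_rpow_atTop (by linarith)).comp
      (tendsto_atTop_add_const_right _ 1 tendsto_natCast_atTop_atTop)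
  have hlim := (tendsto_Gamma_mul_gammaRatio_div_rpow (by linarith : 0 < β)).sub
    ((tendsto_const_nhds (x := Real.Gamma β)).div_atTop hpow)
  rw [sub_zero] at hlim
  refine hlim.congr fun n => ?_
  have hn : (0 : ℝ) < n + 1 := by positivity
  have : β - 1 ≠ 0 := by linarith
  have : 1 - β ≠ 0 := by linarith
  have : Real.Gamma β ≠ 0 := (Real.Gamma_pos_of_pos (by linarith)).ne'
  have : ((n : ℝ) + 1) ^ β ≠ 0 := (Real.rpow_pos_of_pos hn β).ne'
  rw [Pi.div_apply, eq_gammaRatio_of_recurrence hβ.ne' ha1 hrec, Real.rpow_sub hn, Real.rpow_one,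
    Real.Gamma_add_one (by linarith)]
  push_cast
  field_simp
  ring

variable {Ω : Type*}

lemma erwFiltration_le {mΩ : MeasurableSpace Ω} {X : ℕ → Ω → ℝ} (hX : ∀ n, Measurable (X n))
    (n : ℕ) : erwFiltration X n ≤ mΩ :=
  iSup₂_le fun i _ => measurable_iff_comap_le.mp (hX i)

lemma measurable_erwS_erwFiltration [MeasurableSpace Ω] (X : ℕ → Ω → ℝ) (n : ℕ) :
    Measurable[erwFiltration X n] (erwS X n) :=
  Finset.measurable_sum _ fun i hi => measurable_iff_comap_le.mpr <|
    le_iSup₂ (f := fun i (_ : i ∈ Finset.Icc 1 n) => MeasurableSpace.comap (X i) inferInstance)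
      i hi

end ERW

namespace IsERW

open ERW

variable {Ω : Type*} [MeasurableSpace Ω] {μ : Measure Ω} {p q : ℝ} {X : ℕ → Ω → ℝ}

lemma abs_step_le_one (h : IsERW μ p q X) {n : ℕ} (hn : 1 ≤ n) : ∀ᵐ ω ∂μ, |X n ω| ≤ 1 := by
  filter_upwards [h.pm_one n hn] with ω hω
  rcases hω with hω | hω <;> simp [hω]

lemma sq_step_eq_one (h : IsERW μ p q X) {n : ℕ} (hn : 1 ≤ n) : ∀ᵐ ω ∂μ, X n ω ^ 2 = 1 := by
  filter_upwards [h.pm_one n hn] with ω hω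
  rcases hω with hω | hω <;> simp [hω]

lemma abs_erwS_le (h : IsERW μ p q X) (n : ℕ) : ∀ᵐ ω ∂μ, |erwS X n ω| ≤ n := by
  have hsteps : ∀ᵐ ω ∂μ, ∀ i ∈ Finset.Icc 1 n, |X i ω| ≤ 1 :=
    (eventually_all_finset _).mpr fun i hi => h.abs_step_le_one (Finset.mem_Icc.mp hi).1
  filter_upwards [hsteps] with ω hω
  calc |erwS X n ω| ≤ ∑ i ∈ Finset.Icc 1 n, |X i ω| := Finset.abs_sum_le_sum_abs _ _
    _ ≤ ∑ _i ∈ Finset.Icc 1 n, (1 : ℝ) := Finset.sum_le_sum hω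
    _ = n := by simp

lemma measurable_erwS (h : IsERW μ p q X) (n : ℕ) : Measurable (erwS X n) :=
  (measurable_erwS_erwFiltration X n).mono (erwFiltration_le h.meas n) le_rfl

lemma integrable_of_ae_abs_le (h : IsERW μ p q X) {f : Ω → ℝ} (hf : Measurable f) (C : ℝ)
    (hC : ∀ᵐ ω ∂μ, |f ω| ≤ C) : Integrable f μ :=
  have := h.prob
  Integrable.of_bound hf.aestronglyMeasurable C (by simpa using hC)

lemma integrable_erwS_mul_step (h : IsERW μ p q X) (n : ℕ) :
    Integrable (fun ω => erwS X n ω * X (n + 1) ω) μ := by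
  refine h.integrable_of_ae_abs_le ((h.measurable_erwS n).mul (h.meas _)) n ?_
  filter_upwards [h.abs_erwS_le n, h.abs_step_le_one (Nat.le_add_left 1 n)] with ω hS hX
  rw [abs_mul]
  nlinarith [abs_nonneg (erwS X n ω), abs_nonneg (X (n + 1) ω)]

lemma integrable_sq_erwS (h : IsERW μ p q X) (n : ℕ) :
    Integrable (fun ω => erwS X n ω ^ 2) μ := by
  refine h.integrable_of_ae_abs_le ((h.measurable_erwS n).pow_const 2) (n ^ 2) ?_
  filter_upwards [h.abs_erwS_le n] with ω hS
  rw [abs_pow]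
  exact pow_le_pow_left₀ (abs_nonneg _) hS 2

lemma condExp_step (h : IsERW μ p q X) {n : ℕ} (hn : 1 ≤ n) :
    μ[X (n + 1) | erwFiltration X n] =ᵐ[μ] fun ω => (2 * p - 1) * erwS X n ω / n := by
  have := h.prob
  have hcond := h.cond n hn
  set I : Ω → ℝ := {ω | X (n + 1) ω = 1}.indicator fun _ => 1
  have hI : Integrable I μ :=
    (integrable_const 1).indicator (h.meas (n + 1) (measurableSet_singleton 1))
  have hXI : X (n + 1) =ᵐ[μ] (2 : ℝ) • I - fun _ => 1 := by
    filter_upwards [h.pm_one (n + 1) (by omega)] with ω hω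
    rcases hω with hω | hω <;> simp [I, Set.indicator_apply, hω] <;> norm_num
  filter_upwards [condExp_congr_ae (m := erwFiltration X n) hXI,
    condExp_sub (hI.smul (2 : ℝ)) (integrable_const 1) (erwFiltration X n),
    condExp_smul (μ := μ) (2 : ℝ) I (erwFiltration X n), hcond] with ω h1 h2 h3 h4
  rw [h1, h2, Pi.sub_apply, h3, condExp_const (erwFiltration_le h.meas n)]
  simp only [Pi.smul_apply, smul_eq_mul, h4]
  ring

lemma integral_erwS_mul_step (h : IsERW μ p q X) {n : ℕ} (hn : 1 ≤ n) :
    ∫ ω, erwS X n ω * X (n + 1) ω ∂μ = (2 * p - 1) / n * ∫ ω, erwS X n ω ^ 2 ∂μ := by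
  have := h.prob
  have hX : Integrable (X (n + 1)) μ :=
    h.integrable_of_ae_abs_le (h.meas _) 1 (h.abs_step_le_one (by omega))
  have hpull : μ[fun ω => erwS X n ω * X (n + 1) ω | erwFiltration X n] =ᵐ[μ]
      erwS X n * μ[X (n + 1) | erwFiltration X n] := condExp_mul_of_stronglyMeasurable_left
    (measurable_erwS_erwFiltration X n).stronglyMeasurable (h.integrable_erwS_mul_step n) hX
  rw [← integral_condExp (erwFiltration_le h.meas n), ← integral_const_mul]
  refine integral_congr_ae ?_
  filter_upwards [hpull, h.condExp_step hn] with ω h1 h2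
  rw [h1, Pi.mul_apply, h2]
  ring

lemma integral_sq_erwS_one (h : IsERW μ p q X) : ∫ ω, erwS X 1 ω ^ 2 ∂μ = 1 := by
  have := h.prob
  have : (fun ω => erwS X 1 ω ^ 2) =ᵐ[μ] fun _ => 1 := by
    filter_upwards [h.sq_step_eq_one le_rfl] with ω hω
    simpa [erwS] using hω
  simp [integral_congr_ae this]

lemma integral_sq_erwS_succ (h : IsERW μ p q X) {n : ℕ} (hn : 1 ≤ n) :
    ∫ ω, erwS X (n + 1) ω ^ 2 ∂μ =
      (1 + 2 * (2 * p - 1) / n) * ∫ ω, erwS X n ω ^ 2 ∂μ + 1 := by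
  have := h.prob
  have hexpand : (fun ω => erwS X (n + 1) ω ^ 2) =ᵐ[μ]
      fun ω => (erwS X n ω ^ 2 + 2 * (erwS X n ω * X (n + 1) ω)) + 1 := by
    filter_upwards [h.sq_step_eq_one (Nat.le_add_left 1 n)] with ω hω
    rw [erwS, Finset.sum_Icc_succ_top (Nat.le_add_left 1 n), ← erwS, ← hω]
    ring
  have hS2 := h.integrable_sq_erwS n
  have hSX := (h.integrable_erwS_mul_step n).const_mul 2
  rw [integral_congr_ae hexpand, integral_add (hS2.fun_add hSX) (integrable_const 1),
    integral_add hS2 hSX, integral_const_mul, h.integral_erwS_mul_step hn, integral_const,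
    probReal_univ, smul_eq_mul, mul_one]
  ring

end IsERW

/-- Asymptotics of the mean square displacement in the diffusive, marginally
superdiffusive, and superdiffusive regimes. -/
theorem stmt_11 {Ω : Type*} [MeasurableSpace Ω] (μ : MeasureTheory.Measure Ω)
    (p q α : ℝ) (X : ℕ → Ω → ℝ) (hERW : IsERW μ p q X) (hα : α = 2 * p - 1) :
    (-1 < α → α < 1 / 2 →
      (fun n : ℕ => ∫ ω, (erwS X n ω) ^ 2 ∂μ) ~[atTop]
        fun n : ℕ => (n : ℝ) / (1 - 2 * α)) ∧
    (α = 1 / 2 →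
      (fun n : ℕ => ∫ ω, (erwS X n ω) ^ 2 ∂μ) ~[atTop]
        fun n : ℕ => (n : ℝ) * Real.log n) ∧
    (1 / 2 < α → α < 1 →
      (fun n : ℕ => ∫ ω, (erwS X n ω) ^ 2 ∂μ) ~[atTop]
        fun n : ℕ => (n : ℝ) ^ (2 * α) / ((2 * α - 1) * Real.Gamma (2 * α))) := by
  have h1 := hERW.integral_sq_erwS_one
  have hrec : ∀ n, 1 ≤ n → ∫ ω, erwS X (n + 1) ω ^ 2 ∂μ =
      (1 + 2 * α / n) * ∫ ω, erwS X n ω ^ 2 ∂μ + 1 := by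
    rw [hα]
    exact fun n hn => hERW.integral_sq_erwS_succ hn
  refine ⟨fun hlo hhi => ?_, fun hcrit => ?_, fun hlo _ => ?_⟩
  · exact ERW.isEquivalent_of_recurrence_of_lt_one (by linarith) (by linarith) h1 hrec
  · rw [show 2 * α = 1 by linarith] at hrec
    exact ERW.isEquivalent_of_recurrence_one h1 hrec
  · exact ERW.isEquivalent_of_recurrence_of_one_lt (by linarith) h1 hrec
end

section
/- Let S_n be the elephant random walk with memory parameter p ∈ (0,1) and first-step parameter q ∈ [0,1], and set α = 2p−1. Then for all m, n ∈ ℕ, the even moments satisfy the recursion E[(S_{n+1})^{2m}] = 1 + ∑_{ℓ=1}^{m} { C(2m, 2ℓ) + (α/n)·C(2m, 2ℓ−1) } · E[(S_n)^{2ℓ}], where C(a,b) denotes the binomial coefficient. -/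
open MeasureTheory ProbabilityTheory Filter Asymptotics

private lemma sum_range_split (f : ℕ → ℝ) (m : ℕ) :
    ∑ k ∈ Finset.range (2 * m + 1), f k
      = ∑ ℓ ∈ Finset.range (m + 1), f (2 * ℓ) + ∑ ℓ ∈ Finset.range m, f (2 * ℓ + 1) := by
  induction m with
  | zero => simp
  | succ m ih =>
      have h : 2 * (m + 1) + 1 = (2 * m + 1) + 1 + 1 := by ring
      rw [h, Finset.sum_range_succ, Finset.sum_range_succ, ih,
        Finset.sum_range_succ (f := fun ℓ => f (2 * ℓ)) (n := m + 1),
        Finset.sum_range_succ (f := fun ℓ => f (2 * ℓ + 1)) (n := m)]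
      have e1 : 2 * m + 1 + 1 = 2 * (m + 1) := by ring
      rw [e1]
      ring

/-- Recursion for the even moments of Sₙ. -/
theorem stmt_13 {Ω : Type*} [MeasurableSpace Ω] (μ : MeasureTheory.Measure Ω)
    (p q α : ℝ) (X : ℕ → Ω → ℝ) (hERW : IsERW μ p q X) (hα : α = 2 * p - 1) :
    ∀ m n : ℕ, 1 ≤ m → 1 ≤ n →
      (∫ ω, (erwS X (n + 1) ω) ^ (2 * m) ∂μ) =
        1 + ∑ ℓ ∈ Finset.Icc 1 m,
          (((2 * m).choose (2 * ℓ) : ℝ) +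
              α / (n : ℝ) * ((2 * m).choose (2 * ℓ - 1) : ℝ)) *
            ∫ ω, (erwS X n ω) ^ (2 * ℓ) ∂μ := by
  intro m n hm hn
  haveI : IsProbabilityMeasure μ := hERW.prob
  have hn0 : (n : ℝ) ≠ 0 := Nat.cast_ne_zero.2 (by omega)
  -- the filtration
  have hF : erwFiltration X n ≤ ‹MeasurableSpace Ω› :=
    iSup₂_le fun i _ => measurable_iff_comap_le.mp (hERW.meas i)
  -- measurability of Sₙ with respect to 𝓕ₙ
  have hSF : Measurable[erwFiltration X n] (erwS X n) := by
    apply Finset.measurable_sum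
    intro i hi
    exact measurable_iff_comap_le.mpr
      (le_iSup₂ (f := fun i (_ : i ∈ Finset.Icc 1 n) =>
        MeasurableSpace.comap (X i) inferInstance) i hi)
  have hSm : Measurable (erwS X n) := hSF.mono hF le_rfl
  -- a.e. bounds
  have hpm : ∀ i, 1 ≤ i → ∀ᵐ ω ∂μ, |X i ω| = 1 := fun i hi =>
    (hERW.pm_one i hi).mono (by rintro ω (h | h) <;> simp [h])
  have hSb : ∀ᵐ ω ∂μ, |erwS X n ω| ≤ (n : ℝ) := by
    have hall : ∀ᵐ ω ∂μ, ∀ i ∈ Finset.Icc 1 n, |X i ω| = 1 := by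
      rw [Filter.eventually_all_finset]
      exact fun i hi => hpm i (Finset.mem_Icc.mp hi).1
    filter_upwards [hall] with ω h
    calc |erwS X n ω| ≤ ∑ i ∈ Finset.Icc 1 n, |X i ω| := Finset.abs_sum_le_sum_abs _ _
      _ = ∑ _i ∈ Finset.Icc 1 n, (1:ℝ) := Finset.sum_congr rfl fun i hi => h i hi
      _ = (n : ℝ) := by simp
  -- integrability
  have intS : ∀ k : ℕ, Integrable (fun ω => erwS X n ω ^ k) μ := by
    intro k
    refine ⟨(hSm.pow_const k).aestronglyMeasurable,
      HasFiniteIntegral.of_bounded (C := (n : ℝ) ^ k) ?_⟩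
    filter_upwards [hSb] with ω h
    simpa [Real.norm_eq_abs, abs_pow] using pow_le_pow_left₀ (abs_nonneg _) h k
  have intSX : ∀ k : ℕ, Integrable (fun ω => erwS X n ω ^ k * X (n + 1) ω) μ := by
    intro k
    refine ⟨((hSm.pow_const k).mul (hERW.meas (n + 1))).aestronglyMeasurable,
      HasFiniteIntegral.of_bounded (C := (n : ℝ) ^ k) ?_⟩
    filter_upwards [hSb, hpm (n + 1) (by omega)] with ω h1 h2
    rw [Real.norm_eq_abs, abs_mul, h2, mul_one, abs_pow]
    exact pow_le_pow_left₀ (abs_nonneg _) h1 k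
  -- the indicator of the event {X_{n+1} = 1}
  set I : Ω → ℝ := {ω' | X (n + 1) ω' = 1}.indicator fun _ => (1:ℝ) with hIdef
  have hsetmeas : MeasurableSet {ω' | X (n + 1) ω' = 1} :=
    hERW.meas (n + 1) (measurableSet_singleton 1)
  have intI : Integrable I μ := (integrable_const (1:ℝ)).indicator hsetmeas
  have hXrep : X (n + 1) =ᵐ[μ] (2:ℝ) • I - fun _ => (1:ℝ) := by
    filter_upwards [hERW.pm_one (n + 1) (by omega)] with ω h
    simp only [Pi.sub_apply, Pi.smul_apply, smul_eq_mul]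
    rcases h with h | h
    · have hmem : ω ∈ {ω' | X (n + 1) ω' = 1} := h
      rw [hIdef]
      simp only [Set.indicator_of_mem hmem, h]
      norm_num
    · have hmem : ω ∉ {ω' | X (n + 1) ω' = 1} := by
        simp only [Set.mem_setOf_eq, h]; norm_num
      rw [hIdef]
      simp only [Set.indicator_of_notMem hmem, h]
      norm_num
  have intX : Integrable (X (n + 1)) μ :=
    ((intI.smul (2:ℝ)).sub (integrable_const 1)).congr hXrep.symm
  -- conditional expectation of X_{n+1}
  have hcond := hERW.cond n hn
  have hcX : μ[X (n + 1) | erwFiltration X n] =ᵐ[μ] fun ω => α * erwS X n ω / n := by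
    have h0 := condExp_congr_ae (m := erwFiltration X n) (μ := μ) hXrep
    have h1 := condExp_sub (μ := μ) (m := erwFiltration X n)
      (intI.smul (2:ℝ)) (integrable_const (1:ℝ))
    have h2 := condExp_smul (μ := μ) (m := erwFiltration X n) (2:ℝ) I
    have h3 := condExp_const (μ := μ) hF (1:ℝ)
    filter_upwards [h0, h1, h2, hcond] with ω e0 e1 e2 e4
    rw [e0, e1]
    simp only [Pi.sub_apply]
    rw [e2, h3]
    simp only [Pi.smul_apply, smul_eq_mul]
    rw [e4, hα]
    ring
  -- key identity for mixed moments
  have key : ∀ k : ℕ, ∫ ω, erwS X n ω ^ k * X (n + 1) ω ∂μ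
      = α / n * ∫ ω, erwS X n ω ^ (k + 1) ∂μ := by
    intro k
    have hSkF : StronglyMeasurable[erwFiltration X n] (fun ω => erwS X n ω ^ k) :=
      (hSF.pow_const k).stronglyMeasurable
    have hpull := condExp_mul_of_stronglyMeasurable_left (μ := μ) hSkF
      (by exact (intSX k : Integrable ((fun ω => erwS X n ω ^ k) * X (n + 1)) μ)) intX
    calc ∫ ω, erwS X n ω ^ k * X (n + 1) ω ∂μ
        = ∫ ω, (μ[(fun ω => erwS X n ω ^ k) * X (n + 1) | erwFiltration X n]) ω ∂μ :=
          (integral_condExp hF).symm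
      _ = ∫ ω, erwS X n ω ^ k * (α * erwS X n ω / n) ∂μ := by
          apply integral_congr_ae
          filter_upwards [hpull, hcX] with ω e1 e2
          simp only [Pi.mul_apply] at e1
          rw [e1, e2]
      _ = α / n * ∫ ω, erwS X n ω ^ (k + 1) ∂μ := by
          rw [← integral_const_mul]
          exact integral_congr_ae (Filter.Eventually.of_forall fun ω => by ring)
  -- a.e. binomial expansion of S_{n+1}^{2m}
  have hexp : ∀ᵐ ω ∂μ, erwS X (n + 1) ω ^ (2 * m)
      = (∑ ℓ ∈ Finset.range (m + 1),
          ((2 * m).choose (2 * ℓ) : ℝ) * erwS X n ω ^ (2 * ℓ))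
        + ∑ ℓ ∈ Finset.range m,
          ((2 * m).choose (2 * ℓ + 1) : ℝ) * (erwS X n ω ^ (2 * ℓ + 1) * X (n + 1) ω) := by
    filter_upwards [hERW.pm_one (n + 1) (by omega)] with ω h
    have hx2 : X (n + 1) ω ^ 2 = 1 := by rcases h with h | h <;> rw [h] <;> norm_num
    have hSsucc : erwS X (n + 1) ω = erwS X n ω + X (n + 1) ω := by
      rw [erwS, erwS, Finset.sum_Icc_succ_top (by omega : 1 ≤ n + 1)]
    rw [hSsucc, add_pow,
      sum_range_split (fun k => erwS X n ω ^ k * X (n + 1) ω ^ (2 * m - k)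
        * ((2 * m).choose k : ℝ)) m]
    congr 1
    · refine Finset.sum_congr rfl fun ℓ hℓ => ?_
      have hle : ℓ ≤ m := Nat.lt_succ_iff.mp (Finset.mem_range.mp hℓ)
      have e : 2 * m - 2 * ℓ = 2 * (m - ℓ) := by omega
      rw [e, pow_mul (X (n + 1) ω), hx2, one_pow, mul_one]
      ring
    · refine Finset.sum_congr rfl fun ℓ hℓ => ?_
      have hlt : ℓ < m := Finset.mem_range.mp hℓ
      have e : 2 * m - (2 * ℓ + 1) = 2 * (m - ℓ - 1) + 1 := by omega
      rw [e, pow_succ (X (n + 1) ω), pow_mul (X (n + 1) ω), hx2, one_pow, one_mul]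
      ring
  -- integrate term by term
  have step1 : ∫ ω, erwS X (n + 1) ω ^ (2 * m) ∂μ
      = (∑ ℓ ∈ Finset.range (m + 1),
          ((2 * m).choose (2 * ℓ) : ℝ) * ∫ ω, erwS X n ω ^ (2 * ℓ) ∂μ)
        + ∑ ℓ ∈ Finset.range m,
          ((2 * m).choose (2 * ℓ + 1) : ℝ) * ∫ ω, erwS X n ω ^ (2 * ℓ + 1) * X (n + 1) ω ∂μ := by
    rw [integral_congr_ae hexp, integral_add
      (integrable_finset_sum _ fun ℓ _ => (intS (2 * ℓ)).const_mul _)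
      (integrable_finset_sum _ fun ℓ _ => (intSX (2 * ℓ + 1)).const_mul _),
      integral_finset_sum _ fun ℓ _ => (intS (2 * ℓ)).const_mul _,
      integral_finset_sum _ fun ℓ _ => (intSX (2 * ℓ + 1)).const_mul _]
    simp_rw [integral_const_mul]
  rw [step1]
  -- rewrite the odd part using the key identity
  have step2 : ∀ ℓ ∈ Finset.range m,
      ((2 * m).choose (2 * ℓ + 1) : ℝ) * ∫ ω, erwS X n ω ^ (2 * ℓ + 1) * X (n + 1) ω ∂μ
        = ((2 * m).choose (2 * ℓ + 1) : ℝ) * (α / n * ∫ ω, erwS X n ω ^ (2 * (ℓ + 1)) ∂μ) := by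
    intro ℓ _
    rw [key (2 * ℓ + 1), show 2 * ℓ + 1 + 1 = 2 * (ℓ + 1) from by omega]
  rw [Finset.sum_congr rfl step2]
  -- peel off the ℓ = 0 term of the even part
  rw [Finset.sum_range_succ' (fun ℓ => ((2 * m).choose (2 * ℓ) : ℝ)
    * ∫ ω, erwS X n ω ^ (2 * ℓ) ∂μ) m]
  have h0term : ((2 * m).choose (2 * 0) : ℝ) * ∫ ω, erwS X n ω ^ (2 * 0) ∂μ = 1 := by
    simp
  rw [h0term]
  -- convert the Icc-sum on the RHS to a range-sum
  have hIcc : ∑ ℓ ∈ Finset.Icc 1 m,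
      (((2 * m).choose (2 * ℓ) : ℝ) + α / (n : ℝ) * ((2 * m).choose (2 * ℓ - 1) : ℝ))
        * ∫ ω, erwS X n ω ^ (2 * ℓ) ∂μ
      = ∑ j ∈ Finset.range m,
      (((2 * m).choose (2 * (j + 1)) : ℝ) + α / (n : ℝ) * ((2 * m).choose (2 * (j + 1) - 1) : ℝ))
        * ∫ ω, erwS X n ω ^ (2 * (j + 1)) ∂μ := by
    rw [← Finset.Ico_add_one_right_eq_Icc, Finset.sum_Ico_eq_sum_range]
    refine Finset.sum_congr (by simp) fun j _ => by rw [Nat.add_comm 1 j]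
  rw [hIcc]
  have hsum : ∀ j ∈ Finset.range m,
      ((2 * m).choose (2 * (j + 1)) : ℝ) * ∫ ω, erwS X n ω ^ (2 * (j + 1)) ∂μ
        + ((2 * m).choose (2 * j + 1) : ℝ) * (α / n * ∫ ω, erwS X n ω ^ (2 * (j + 1)) ∂μ)
      = (((2 * m).choose (2 * (j + 1)) : ℝ)
          + α / (n : ℝ) * ((2 * m).choose (2 * (j + 1) - 1) : ℝ))
        * ∫ ω, erwS X n ω ^ (2 * (j + 1)) ∂μ := by
    intro j _
    have e : 2 * (j + 1) - 1 = 2 * j + 1 := by omega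
    rw [e]
    ring
  have hAB : (∑ j ∈ Finset.range m,
        ((2 * m).choose (2 * (j + 1)) : ℝ) * ∫ ω, erwS X n ω ^ (2 * (j + 1)) ∂μ)
      + ∑ j ∈ Finset.range m,
        ((2 * m).choose (2 * j + 1) : ℝ) * (α / n * ∫ ω, erwS X n ω ^ (2 * (j + 1)) ∂μ)
      = ∑ j ∈ Finset.range m,
        (((2 * m).choose (2 * (j + 1)) : ℝ)
            + α / (n : ℝ) * ((2 * m).choose (2 * (j + 1) - 1) : ℝ))
          * ∫ ω, erwS X n ω ^ (2 * (j + 1)) ∂μ := by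
    rw [← Finset.sum_add_distrib]
    exact Finset.sum_congr rfl hsum
  linarith [hAB]
end

section
/- For δ ∈ ℝ, define j_0(δ) = k if δ = −k for some k ∈ ℕ and j_0(δ) = 0 otherwise, and define A_δ = k! if δ = −k for some k ∈ ℕ and A_δ = 1/Γ(1+δ) otherwise. Then ∏_{j=j_0(δ)+1}^{n−1} (1 + δ/j) is asymptotically equivalent to A_δ · n^δ as n → ∞. -/
open Filter Asymptotics

noncomputable section
open scoped Classical

/-- `j₀(δ) = k` if `δ = -k` for some `k ∈ {1,2,…}`, and `j₀(δ) = 0` otherwise. -/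
def j0 (δ : ℝ) : ℕ :=
  if h : ∃ k : ℕ, 1 ≤ k ∧ δ = -(k : ℝ) then h.choose else 0

/-- `A_δ = k!` if `δ = -k` for some `k ∈ {1,2,…}`, and `A_δ = 1/Γ(1+δ)` otherwise. -/
def Aconst (δ : ℝ) : ℝ :=
  if h : ∃ k : ℕ, 1 ≤ k ∧ δ = -(k : ℝ) then (Nat.factorial h.choose : ℝ) else 1 / Real.Gamma (1 + δ)

/-! For `δ` not a negative integer, `∏_{j=1}^{n-1} (1 + δ/j) = (1+δ)(2+δ)⋯(n-1+δ)/(n-1)!`, and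
Euler's limit `Γ(s) = lim n^s n!/(s(s+1)⋯(s+n))` (`Real.GammaSeq`) at `s = 1 + δ` identifies this
with `n^δ/Γ(1+δ)` up to a factor tending to `1`. For `δ = -k` the substitution `i = j - k` turns
each factor `(j-k)/j` into `(1 + k/i)⁻¹`, so the product is the inverse of the first case for
`δ = k`, taken at `n - k`. Shifting `n` costs nothing since `(n + a)^δ ~ n^δ`. -/

lemma isEquivalent_natCast_add_rpow (a r : ℝ) :
    (fun n : ℕ => ((n : ℝ) + a) ^ r) ~[atTop] fun n : ℕ => (n : ℝ) ^ r :=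
  (IsEquivalent.refl.add_const_of_norm_tendsto_atTop
    (tendsto_norm_atTop_atTop.comp tendsto_natCast_atTop_atTop)).rpow
    (fun n => Nat.cast_nonneg n)

lemma Asymptotics.IsEquivalent.comp_natSub {f : ℕ → ℝ} {A δ : ℝ} (c : ℕ)
    (h : f ~[atTop] fun n => A * (n : ℝ) ^ δ) :
    (fun n => f (n - c)) ~[atTop] fun n => A * (n : ℝ) ^ δ := by
  refine (h.comp_tendsto (tendsto_sub_atTop_nat c)).trans ?_
  refine (IsEquivalent.refl.mul (isEquivalent_natCast_add_rpow (-c) δ)).congr_left ?_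
  filter_upwards [eventually_ge_atTop c] with n hn
  simp [Nat.cast_sub hn, sub_eq_add_neg]

lemma prod_Ico_one_add_div_eq (δ : ℝ) (n : ℕ) :
    ∏ j ∈ Finset.Ico 1 (n + 1), (1 + δ / (j : ℝ)) =
      (∏ j ∈ Finset.range n, (1 + δ + j)) / n.factorial := by
  rw [Finset.prod_Ico_eq_prod_range, Nat.add_sub_cancel, ← Finset.prod_range_add_one_eq_factorial,
    Nat.cast_prod, ← Finset.prod_div_distrib]
  refine Finset.prod_congr rfl fun j _ => ?_
  push_cast
  field_simp
  ring

lemma prod_Ico_one_add_div_eq_GammaSeq (δ : ℝ) (hδ : ∀ m : ℕ, 1 + δ ≠ -m) {n : ℕ} (hn : n ≠ 0) :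
    ∏ j ∈ Finset.Ico 1 (n + 1), (1 + δ / (j : ℝ)) =
      (n : ℝ) ^ δ / Real.GammaSeq (1 + δ) n * (n / (n + (1 + δ))) := by
  have hn' : (0 : ℝ) < n := by positivity
  have hprod : ∏ j ∈ Finset.range n, (1 + δ + j) ≠ 0 :=
    Finset.prod_ne_zero_iff.mpr fun j _ h => hδ j (by linarith)
  have hlast : (n : ℝ) + (1 + δ) ≠ 0 := fun h => hδ n (by linarith)
  rw [prod_Ico_one_add_div_eq, Real.GammaSeq, Finset.prod_range_succ,
    Real.rpow_add hn', Real.rpow_one]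
  have hpow := (Real.rpow_pos_of_pos hn' δ).ne'
  have hfact : (n.factorial : ℝ) ≠ 0 := by positivity
  field_simp
  ring

lemma isEquivalent_prod_Ico_one_add_div (δ : ℝ) (hδ : ∀ m : ℕ, 1 + δ ≠ -m) :
    (fun n : ℕ => ∏ j ∈ Finset.Ico 1 n, (1 + δ / (j : ℝ)))
      ~[atTop] fun n : ℕ => (Real.Gamma (1 + δ))⁻¹ * (n : ℝ) ^ δ := by
  have hΓ : Real.Gamma (1 + δ) ≠ 0 := Real.Gamma_ne_zero hδ
  have hGammaSeq : Real.GammaSeq (1 + δ) ~[atTop] fun _ => Real.Gamma (1 + δ) :=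
    (isEquivalent_const_iff_tendsto hΓ).mpr (Real.GammaSeq_tendsto_Gamma _)
  have hratio : (fun n : ℕ => (n : ℝ) / (n + (1 + δ))) ~[atTop] fun _ => (1 : ℝ) :=
    (isEquivalent_const_iff_tendsto one_ne_zero).mpr (tendsto_natCast_div_add_atTop _)
  have hsucc : (fun n : ℕ => ∏ j ∈ Finset.Ico 1 (n + 1), (1 + δ / (j : ℝ)))
      ~[atTop] fun n : ℕ => (Real.Gamma (1 + δ))⁻¹ * (n : ℝ) ^ δ := by
    have h := ((IsEquivalent.refl (u := fun n : ℕ => (n : ℝ) ^ δ)).div hGammaSeq).mul hratio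
    refine (h.congr_left ?_).congr_right ?_
    · filter_upwards [eventually_ne_atTop 0] with n hn
      exact (prod_Ico_one_add_div_eq_GammaSeq δ hδ hn).symm
    · exact Eventually.of_forall fun n => by simp [div_eq_inv_mul]
  refine (hsucc.comp_natSub 1).congr_left ?_
  filter_upwards [eventually_ge_atTop 1] with n hn
  rw [Nat.sub_add_cancel hn]

lemma prod_Ico_one_sub_div_eq_inv (k n : ℕ) :
    ∏ j ∈ Finset.Ico (k + 1) n, (1 + -(k : ℝ) / j) =
      (∏ i ∈ Finset.Ico 1 (n - k), (1 + (k : ℝ) / i))⁻¹ := by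
  rcases le_or_gt n k with hnk | hkn
  · simp [Finset.Ico_eq_empty_of_le (by omega : n ≤ k + 1), Nat.sub_eq_zero_of_le hnk]
  rw [← Finset.prod_inv_distrib, ← Nat.sub_add_cancel hkn.le, add_comm k 1, ← Finset.prod_Ico_add',
    Nat.add_sub_cancel]
  refine Finset.prod_congr rfl fun i hi => ?_
  have hi : (0 : ℝ) < i := by exact_mod_cast (Finset.mem_Ico.mp hi).1
  push_cast
  field_simp
  ring

lemma isEquivalent_prod_Ico_one_sub_div (k : ℕ) :
    (fun n : ℕ => ∏ j ∈ Finset.Ico (k + 1) n, (1 + -(k : ℝ) / j))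
      ~[atTop] fun n : ℕ => (k.factorial : ℝ) * (n : ℝ) ^ (-(k : ℝ)) := by
  have hk : ∀ m : ℕ, 1 + (k : ℝ) ≠ -m := fun m h => by
    linarith [(Nat.cast_nonneg k : (0 : ℝ) ≤ k), (Nat.cast_nonneg m : (0 : ℝ) ≤ m)]
  have h := (isEquivalent_prod_Ico_one_add_div k hk).inv
  rw [add_comm, Real.Gamma_nat_eq_factorial] at h
  have hinv : (fun n : ℕ => (∏ i ∈ Finset.Ico 1 n, (1 + (k : ℝ) / i))⁻¹)
      ~[atTop] fun n : ℕ => (k.factorial : ℝ) * (n : ℝ) ^ (-(k : ℝ)) := by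
    refine h.congr_right (Eventually.of_forall fun n => ?_)
    simp [Real.rpow_neg (Nat.cast_nonneg n), mul_comm]
  simpa only [prod_Ico_one_sub_div_eq_inv] using hinv.comp_natSub k

/-- Lemma 2: `∏_{j=j₀(δ)+1}^{n-1} (1 + δ/j) ~ A_δ · n^δ` as `n → ∞`. -/
theorem stmt_15 (δ : ℝ) :
    (fun n : ℕ => ∏ j ∈ Finset.Ico (j0 δ + 1) n, (1 + δ / (j : ℝ)))
      ~[atTop] fun n : ℕ => Aconst δ * (n : ℝ) ^ δ := by
  by_cases h : ∃ k : ℕ, 1 ≤ k ∧ δ = -(k : ℝ)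
  · obtain ⟨-, hδ⟩ := h.choose_spec
    simp only [j0, Aconst, dif_pos h]
    generalize h.choose = k at hδ ⊢
    subst hδ
    exact isEquivalent_prod_Ico_one_sub_div k
  · simp only [j0, Aconst, dif_neg h, zero_add, one_div]
    exact isEquivalent_prod_Ico_one_add_div δ fun m hm =>
      h ⟨m + 1, by omega, by push_cast; linarith⟩

end
end
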